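/- arXiv:2110.07991 — 6 statements merged into one kernel-verified Lean document; each statement's English description precedes it below -/
import Mathlib

section
/- A bounded subset B of a Banach space E is limited if and only if for every bounded linear operator T : E → c₀ the image T(B) is totally bounded in c₀. -/
open Filter Topology Bornology

noncomputable section

variable {𝕜 E F : Type*} [RCLike 𝕜] [NormedAddCommGroup E] [NormedSpace 𝕜 E]
  [NormedAddCommGroup F] [NormedSpace 𝕜 F]

/-- `c₀` over `𝕜`: scalar sequences vanishing at infinity, with the sup norm. -/
abbrev czero (𝕜 : Type*) [RCLike 𝕜] := ZeroAtInftyContinuousMap ℕ 𝕜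

/-- A sequence of functionals is weak* null if it converges to `0` pointwise. -/
def WeakStarNull (χ : ℕ → E →L[𝕜] 𝕜) : Prop :=
  ∀ x : E, Tendsto (fun n => χ n x) atTop (𝓝 0)

/-- `sup_{x ∈ B} |χ n x| → 0`. -/
def UnifNull (χ : ℕ → E →L[𝕜] 𝕜) (B : Set E) : Prop :=
  Tendsto (fun n => ⨆ x : B, ‖χ n (x : E)‖) atTop (𝓝 0)

/-- A set is limited if every weak* null sequence converges to `0` uniformly on it. -/
def Limited (𝕜 : Type*) [RCLike 𝕜] {E : Type*} [NormedAddCommGroup E]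
    [NormedSpace 𝕜 E] (B : Set E) : Prop :=
  ∀ χ : ℕ → E →L[𝕜] 𝕜, WeakStarNull χ → UnifNull χ B

/-- A Banach space is Gelfand–Phillips if every (bounded) limited set is totally bounded. -/
def GelfandPhillips (𝕜 E : Type*) [RCLike 𝕜] [NormedAddCommGroup E]
    [NormedSpace 𝕜 E] : Prop :=
  ∀ B : Set E, IsBounded B → Limited 𝕜 B → TotallyBounded B

/-
Operators `T : E → c₀` correspond to weak* null sequences `(χ n)` in `E'` via `T x n = χ n x`,
the bound on `T` coming from Banach–Steinhaus. So `B` is limited iff for every such `T` the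
coordinates of `T x` tend to zero uniformly in `x ∈ B`. In `c₀`, a bounded set has uniformly
vanishing tails iff it is totally bounded: if the tails beyond `N` are below `ε`, the set lies
within `ε` of the compact set of sequences supported in `[0, N)` of norm at most its bound.
-/

open Set Metric ZeroAtInfty

theorem Metric.totallyBounded_of_forall_subset_thickening {α : Type*} [PseudoMetricSpace α]
    {s : Set α} (h : ∀ ε > 0, ∃ K, TotallyBounded K ∧ s ⊆ thickening ε K) :
    TotallyBounded s := by
  refine totallyBounded_iff.2 fun ε hε => ?_
  obtain ⟨K, hK, hsK⟩ := h (ε / 2) (half_pos hε)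
  obtain ⟨t, ht, hKt⟩ := totallyBounded_iff.1 hK (ε / 2) (half_pos hε)
  refine ⟨t, ht, fun x hx => ?_⟩
  obtain ⟨k, hk, hxk⟩ := mem_thickening_iff.1 (hsK hx)
  obtain ⟨y, hy, hky⟩ := mem_iUnion₂.1 (hKt hk)
  refine mem_iUnion₂.2 ⟨y, hy, ?_⟩
  calc dist x y ≤ dist x k + dist k y := dist_triangle x k y
    _ < ε / 2 + ε / 2 := add_lt_add hxk hky
    _ = ε := add_halves ε

theorem tendsto_iSup_norm_iff_tendstoUniformly {ι κ β : Type*} [SeminormedAddCommGroup β]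
    {l : Filter κ} {F : κ → ι → β} (hF : ∀ n, BddAbove (range fun i => ‖F n i‖)) :
    Tendsto (fun n => ⨆ i, ‖F n i‖) l (𝓝 0) ↔ TendstoUniformly F 0 l := by
  rw [tendstoUniformly_iff]
  simp only [Pi.zero_apply, dist_zero_left]
  constructor
  · intro h ε hε
    filter_upwards [h.eventually (gt_mem_nhds hε)] with n hn i
    exact (le_ciSup (hF n) i).trans_lt hn
  · intro h
    refine tendsto_order.2 ⟨fun a ha => Eventually.of_forall fun n => ?_, fun b hb => ?_⟩
    · exact ha.trans_le (Real.iSup_nonneg fun i => norm_nonneg _)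
    · filter_upwards [h (b / 2) (half_pos hb)] with n hn
      exact (Real.iSup_le (fun i => (hn i).le) (half_pos hb).le).trans_lt (half_lt_self hb)

namespace ZeroAtInftyContinuousMap

section

variable {α β : Type*} [TopologicalSpace α] [NormedAddCommGroup β]

theorem norm_apply_le (f : C₀(α, β)) (x : α) : ‖f x‖ ≤ ‖f‖ :=
  f.toBCF.norm_coe_le_norm x

theorem norm_le {f : C₀(α, β)} {C : ℝ} (hC : 0 ≤ C) : ‖f‖ ≤ C ↔ ∀ x, ‖f x‖ ≤ C :=
  BoundedContinuousFunction.norm_le (f := f.toBCF) hC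

theorem dist_le {f g : C₀(α, β)} {C : ℝ} (hC : 0 ≤ C) :
    dist f g ≤ C ↔ ∀ x, dist (f x) (g x) ≤ C :=
  BoundedContinuousFunction.dist_le (f := f.toBCF) (g := g.toBCF) hC

def evalCLM (𝕜 : Type*) [NormedField 𝕜] [NormedSpace 𝕜 β] (x : α) : C₀(α, β) →L[𝕜] β :=
  LinearMap.mkContinuous
    { toFun := fun f => f x
      map_add' := fun _ _ => rfl
      map_smul' := fun _ _ => rfl } 1
    fun f => by simpa using norm_apply_le f x

end

variable {β : Type*} [NormedAddCommGroup β]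

theorem tendsto_atTop (f : C₀(ℕ, β)) : Tendsto f atTop (𝓝 0) :=
  cocompact_eq_atTop (α := ℕ) ▸ f.zero_at_infty'

def ofFin {N : ℕ} (v : Fin N → β) : C₀(ℕ, β) where
  toFun n := if h : n < N then v ⟨n, h⟩ else 0
  continuous_toFun := continuous_of_discreteTopology
  zero_at_infty' := by
    rw [cocompact_eq_atTop]
    refine tendsto_const_nhds.congr' (eventually_atTop.2 ⟨N, fun n hn => ?_⟩)
    simp [not_lt.2 hn]

theorem ofFin_apply_of_lt {N n : ℕ} (v : Fin N → β) (hn : n < N) : ofFin v n = v ⟨n, hn⟩ :=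
  dif_pos hn

theorem ofFin_apply_of_le {N n : ℕ} (v : Fin N → β) (hn : N ≤ n) : ofFin v n = 0 :=
  dif_neg (not_lt.2 hn)

theorem lipschitzWith_ofFin (N : ℕ) : LipschitzWith 1 (ofFin : (Fin N → β) → C₀(ℕ, β)) := by
  refine LipschitzWith.of_dist_le_mul fun v w => ?_
  rw [NNReal.coe_one, one_mul, dist_le dist_nonneg]
  intro n
  rcases lt_or_ge n N with hn | hn
  · rw [ofFin_apply_of_lt v hn, ofFin_apply_of_lt w hn]
    exact dist_le_pi_dist v w _
  · rw [ofFin_apply_of_le v hn, ofFin_apply_of_le w hn, dist_self]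
    exact dist_nonneg

theorem tendstoUniformly_of_totallyBounded_range {ι : Type*} {f : ι → C₀(ℕ, β)}
    (hf : TotallyBounded (range f)) : TendstoUniformly (fun n i => f i n) 0 atTop := by
  refine tendstoUniformly_iff.2 fun ε hε => ?_
  obtain ⟨t, ht, hft⟩ := totallyBounded_iff.1 hf (ε / 2) (half_pos hε)
  have htail : ∀ᶠ n in atTop, ∀ y ∈ t, dist 0 ((y : C₀(ℕ, β)) n) < ε / 2 :=
    (eventually_all_finite ht).2 fun y _ =>
      (tendsto_atTop y).eventually (ball_mem_nhds 0 (half_pos hε)) |>.mono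
        fun n hn => by rwa [dist_comm]
  filter_upwards [htail] with n hn i
  obtain ⟨y, hy, hfy⟩ := mem_iUnion₂.1 (hft (mem_range_self i))
  calc dist 0 (f i n) ≤ dist 0 (y n) + dist (y n) (f i n) := dist_triangle _ _ _
    _ < ε / 2 + ε / 2 := by
      refine add_lt_add (hn y hy) ?_
      rw [dist_comm]
      exact (BoundedContinuousFunction.dist_coe_le_dist n).trans_lt hfy
    _ = ε := add_halves ε

theorem totallyBounded_range_of_tendstoUniformly [ProperSpace β] {ι : Type*}
    {f : ι → C₀(ℕ, β)} (hf : IsBounded (range f))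
    (htail : TendstoUniformly (fun n i => f i n) 0 atTop) : TotallyBounded (range f) := by
  obtain ⟨M, hM⟩ := hf.exists_norm_le
  refine totallyBounded_of_forall_subset_thickening fun ε hε => ?_
  obtain ⟨N, hN⟩ := eventually_atTop.1 (tendstoUniformly_iff.1 htail (ε / 2) (half_pos hε))
  refine ⟨ofFin '' closedBall (0 : Fin N → β) M,
    ((isCompact_closedBall _ _).image (lipschitzWith_ofFin N).continuous).totallyBounded, ?_⟩
  rintro _ ⟨i, rfl⟩
  have hcoord : (fun k : Fin N => f i k) ∈ closedBall 0 M := by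
    rw [mem_closedBall_zero_iff]
    exact pi_norm_le_iff_of_nonneg ((norm_nonneg _).trans (hM _ (mem_range_self i))) |>.2
      fun k => (norm_apply_le _ _).trans (hM _ (mem_range_self i))
  refine mem_thickening_iff.2 ⟨_, mem_image_of_mem _ hcoord, ?_⟩
  refine ((dist_le (half_pos hε).le).2 fun n => ?_).trans_lt (half_lt_self hε)
  rcases lt_or_ge n N with hn | hn
  · rw [ofFin_apply_of_lt _ hn, dist_self]
    exact (half_pos hε).le
  · rw [ofFin_apply_of_le _ hn, dist_comm]
    exact (hN n hn i).le

theorem totallyBounded_range_iff_tendsto_iSup_norm [ProperSpace β] {ι : Type*}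
    {f : ι → C₀(ℕ, β)} (hf : IsBounded (range f)) :
    TotallyBounded (range f) ↔ Tendsto (fun n => ⨆ i, ‖f i n‖) atTop (𝓝 0) := by
  obtain ⟨M, hM⟩ := hf.exists_norm_le
  have hbdd : ∀ n, BddAbove (range fun i => ‖f i n‖) := fun n =>
    ⟨M, forall_mem_range.2 fun i => (norm_apply_le _ _).trans (hM _ (mem_range_self i))⟩
  rw [tendsto_iSup_norm_iff_tendstoUniformly hbdd]
  exact ⟨tendstoUniformly_of_totallyBounded_range,
    totallyBounded_range_of_tendstoUniformly hf⟩

end ZeroAtInftyContinuousMap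

open ZeroAtInftyContinuousMap

namespace WeakStarNull

variable [CompleteSpace E] {χ : ℕ → E →L[𝕜] 𝕜}

theorem exists_norm_le (hχ : WeakStarNull χ) : ∃ C, ∀ n, ‖χ n‖ ≤ C :=
  banach_steinhaus fun x => by
    obtain ⟨C, hC⟩ := (hχ x).norm.bddAbove_range
    exact ⟨C, fun n => hC (mem_range_self n)⟩

def toCzero (hχ : WeakStarNull χ) : E →L[𝕜] czero 𝕜 :=
  LinearMap.mkContinuousOfExistsBound
    { toFun := fun x =>
        ⟨⟨fun n => χ n x, continuous_of_discreteTopology⟩, cocompact_eq_atTop (α := ℕ) ▸ hχ x⟩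
      map_add' := fun x y => by ext n; simp
      map_smul' := fun c x => by ext n; simp }
    (by
      obtain ⟨C, hC⟩ := hχ.exists_norm_le
      have hC0 : 0 ≤ C := (norm_nonneg _).trans (hC 0)
      exact ⟨C, fun x => (ZeroAtInftyContinuousMap.norm_le (mul_nonneg hC0 (norm_nonneg x))).2
        fun n => (χ n).le_of_opNorm_le (hC n) x⟩)

end WeakStarNull

theorem stmt4 [CompleteSpace E] (B : Set E) (hB : IsBounded B) :
    Limited 𝕜 B ↔ ∀ T : E →L[𝕜] czero 𝕜, TotallyBounded (T '' B) := by
  have hTB (T : E →L[𝕜] czero 𝕜) : IsBounded (range fun x : B => T x) :=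
    image_eq_range T B ▸ T.lipschitz.isBounded_image hB
  constructor
  · intro hL T
    rw [image_eq_range, totallyBounded_range_iff_tendsto_iSup_norm (hTB T)]
    exact hL (fun n => (evalCLM 𝕜 n).comp T) fun x => (T x).tendsto_atTop
  · intro hT χ hχ
    have hTχ := hT hχ.toCzero
    rwa [image_eq_range, totallyBounded_range_iff_tendsto_iSup_norm (hTB _)] at hTχ
end
end

section
/- Every separable Banach space is Gelfand–Phillips: if E is a separable Banach space then every limited subset of E is totally bounded. -/
/-!
Let `K` be the closed unit ball of the dual, with the weak* topology. By Hahn–Banach,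
`x ↦ (f ↦ f x)` embeds `E` isometrically into the bounded continuous functions on the compact
space `K`. For separable `E`, `K` is metrizable, so equicontinuity of the image of `B` can be
tested along weak* convergent sequences `gₙ → f` in `K`; since `gₙ - f` is weak* null, limitedness
of `B` says exactly that `gₙ → f` uniformly on `B`. Arzelà–Ascoli then makes the image of `B`
relatively compact, hence `B` totally bounded.
-/

open Filter Topology Bornology

noncomputable section

variable {𝕜 E F : Type*} [RCLike 𝕜] [NormedAddCommGroup E] [NormedSpace 𝕜 E]
  [NormedAddCommGroup F] [NormedSpace 𝕜 F]

variable {B : Set E}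

/-- `IsBounded B` is what makes the supremum in `UnifNull` a genuine one: `⨆` of an unbounded
family of reals is `0`. -/
theorem UnifNull.tendstoUniformlyOn {χ : ℕ → E →L[𝕜] 𝕜} (hχ : UnifNull χ B) (hB : IsBounded B) :
    TendstoUniformlyOn (fun n x => χ n x) 0 atTop B := by
  obtain ⟨C, hC⟩ := isBounded_iff_forall_norm_le.mp hB
  refine Metric.tendstoUniformlyOn_iff.mpr fun ε hε => ?_
  filter_upwards [hχ.eventually_lt_const hε] with n hn x hx
  have hbdd : BddAbove (Set.range fun y : B => ‖χ n y‖) :=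
    ⟨‖χ n‖ * C, by
      rintro _ ⟨y, rfl⟩
      exact (χ n).le_opNorm_of_le (hC y y.2)⟩
  rw [Pi.zero_apply, dist_zero_left]
  exact (le_ciSup hbdd ⟨x, hx⟩).trans_lt hn

theorem Limited.tendstoUniformlyOn_of_tendsto (hlim : Limited 𝕜 B) (hB : IsBounded B)
    {g : ℕ → WeakDual 𝕜 E} {f : WeakDual 𝕜 E} (hg : Tendsto g atTop (𝓝 f)) :
    TendstoUniformlyOn (fun n x => g n x) (fun x => f x) atTop B := by
  let χ : ℕ → E →L[𝕜] 𝕜 := fun n => WeakDual.toStrongDual (g n) - WeakDual.toStrongDual f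
  have hχ : WeakStarNull χ := fun x => by
    simpa [χ] using ((WeakDual.eval_continuous x).tendsto f).comp hg |>.sub_const (f x)
  refine Metric.tendstoUniformlyOn_iff.mpr fun ε hε => ?_
  filter_upwards [Metric.tendstoUniformlyOn_iff.mp ((hlim χ hχ).tendstoUniformlyOn hB) ε hε]
    with n hn x hx
  simpa [χ, dist_eq_norm, norm_sub_rev] using hn x hx

open scoped BoundedContinuousFunction

variable (𝕜 E) in
def dualUnitBall : Set (WeakDual 𝕜 E) :=
  WeakDual.toStrongDual ⁻¹' Metric.closedBall 0 1

theorem isCompact_dualUnitBall : IsCompact (dualUnitBall 𝕜 E) :=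
  WeakDual.isCompact_closedBall 0 1

instance : CompactSpace (dualUnitBall 𝕜 E) :=
  isCompact_iff_compactSpace.mp isCompact_dualUnitBall

theorem norm_apply_le_of_mem_dualUnitBall (f : dualUnitBall 𝕜 E) (x : E) :
    ‖(f : WeakDual 𝕜 E) x‖ ≤ ‖x‖ :=
  (WeakDual.toStrongDual (f : WeakDual 𝕜 E)).le_of_opNorm_le
    (by simpa [dualUnitBall] using f.2) x |>.trans_eq (one_mul _)

def evalDualUnitBall (x : E) : dualUnitBall 𝕜 E →ᵇ 𝕜 :=
  .ofNormedAddCommGroup (fun f => (f : WeakDual 𝕜 E) x)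
    ((WeakDual.eval_continuous x).comp continuous_subtype_val) ‖x‖
    fun f => norm_apply_le_of_mem_dualUnitBall f x

@[simp]
theorem evalDualUnitBall_apply (x : E) (f : dualUnitBall 𝕜 E) :
    evalDualUnitBall x f = (f : WeakDual 𝕜 E) x :=
  rfl

theorem evalDualUnitBall_sub (x y : E) :
    evalDualUnitBall (x - y) =
      (evalDualUnitBall x - evalDualUnitBall y : dualUnitBall 𝕜 E →ᵇ 𝕜) := by
  ext f
  simp

theorem norm_evalDualUnitBall (x : E) : ‖(evalDualUnitBall x : dualUnitBall 𝕜 E →ᵇ 𝕜)‖ = ‖x‖ := by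
  refine le_antisymm ((BoundedContinuousFunction.norm_le (norm_nonneg x)).mpr
    (norm_apply_le_of_mem_dualUnitBall · x)) ?_
  obtain ⟨g, hg, hgx⟩ := exists_dual_vector'' 𝕜 x
  let f : dualUnitBall 𝕜 E := ⟨WeakDual.toStrongDual.symm g, by simpa [dualUnitBall] using hg⟩
  calc ‖x‖ = ‖evalDualUnitBall x f‖ := by simp [f, hgx]
    _ ≤ _ := (evalDualUnitBall x).norm_coe_le_norm f

theorem isometry_evalDualUnitBall :
    Isometry (evalDualUnitBall : E → dualUnitBall 𝕜 E →ᵇ 𝕜) :=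
  .of_dist_eq fun x y => by
    rw [dist_eq_norm, dist_eq_norm, ← evalDualUnitBall_sub, norm_evalDualUnitBall]

theorem Limited.equicontinuous_evalDualUnitBall [TopologicalSpace.SeparableSpace E]
    (hlim : Limited 𝕜 B) (hB : IsBounded B) :
    Equicontinuous fun φ : (evalDualUnitBall '' B : Set (dualUnitBall 𝕜 E →ᵇ 𝕜)) => ⇑φ.1 := by
  have := WeakDual.metrizable_of_isCompact 𝕜 E _ (isCompact_dualUnitBall (𝕜 := 𝕜) (E := E))
  intro f
  refine Metric.equicontinuousAt_iff_right.mpr fun ε hε => eventually_iff_seq_eventually.mpr ?_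
  intro g hg
  have hconv := hlim.tendstoUniformlyOn_of_tendsto hB ((continuous_subtype_val.tendsto f).comp hg)
  filter_upwards [Metric.tendstoUniformlyOn_iff.mp hconv ε hε] with n hn
  rintro ⟨_, x, hx, rfl⟩
  exact hn x hx

theorem stmt9_general [TopologicalSpace.SeparableSpace E] :
    GelfandPhillips 𝕜 E := by
  intro B hB hlim
  obtain ⟨C, hC⟩ := isBounded_iff_forall_norm_le.mp hB
  have hvalues : ∀ (φ : dualUnitBall 𝕜 E →ᵇ 𝕜) f, φ ∈ evalDualUnitBall '' B →
      φ f ∈ Metric.closedBall 0 C := by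
    rintro _ f ⟨x, hx, rfl⟩
    simpa using (norm_apply_le_of_mem_dualUnitBall f x).trans (hC x hx)
  have hcompact := BoundedContinuousFunction.arzela_ascoli _ (isCompact_closedBall 0 C) _ hvalues
    (Limited.equicontinuous_evalDualUnitBall hlim hB)
  exact (totallyBounded_preimage isometry_evalDualUnitBall.isUniformInducing
    (hcompact.totallyBounded.subset subset_closure)).subset (Set.subset_preimage_image _ _)

theorem stmt9 [CompleteSpace E] [TopologicalSpace.SeparableSpace E] :
    GelfandPhillips 𝕜 E :=
  stmt9_general
end
end

section
/- Let E be a Banach space and (χ_n) a weak* null sequence in E' such that every bounded subset B of E with sup_{x∈B} |χ_n(x)| → 0 is totally bounded. Then the closed subspace Z = ⋂_n ker χ_n is finite dimensional. -/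
open Filter Topology Bornology

noncomputable section

variable {𝕜 E F : Type*} [RCLike 𝕜] [NormedAddCommGroup E] [NormedSpace 𝕜 E]
  [NormedAddCommGroup F] [NormedSpace 𝕜 F]

/-! On `Z` every `χ n` vanishes, so every bounded subset of `Z` is trivially a set on which
`χ n → 0` uniformly, hence totally bounded. A normed space whose balls are all totally bounded is
finite dimensional by Riesz's lemma: otherwise some ball contains a `1`-separated sequence. -/

theorem TotallyBounded.exists_ne_dist_lt {α : Type*} [PseudoMetricSpace α] {s : Set α}
    (hs : TotallyBounded s) {ε : ℝ} (hε : 0 < ε) {f : ℕ → α} (hf : ∀ n, f n ∈ s) :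
    ∃ m n, m ≠ n ∧ dist (f m) (f n) < ε := by
  obtain ⟨t, ht, hst⟩ := Metric.totallyBounded_iff.1 hs (ε / 2) (half_pos hε)
  have hcover : ∀ n, ∃ y : t, f n ∈ Metric.ball (y : α) (ε / 2) := fun n => by
    simpa using hst (hf n)
  choose c hc using hcover
  have : Finite t := ht
  obtain ⟨m, n, hmn, hc_eq⟩ := Finite.exists_ne_map_eq_of_infinite c
  refine ⟨m, n, hmn, ?_⟩
  calc dist (f m) (f n) ≤ dist (f m) (c m) + dist (f n) (c n) := by
        rw [hc_eq]; exact dist_triangle_right _ _ _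
    _ < ε / 2 + ε / 2 := add_lt_add (hc m) (hc n)
    _ = ε := add_halves ε

theorem FiniteDimensional.of_forall_totallyBounded_closedBall (𝕜 : Type*) {V : Type*}
    [NontriviallyNormedField 𝕜] [CompleteSpace 𝕜] [NormedAddCommGroup V] [NormedSpace 𝕜 V]
    (h : ∀ R, TotallyBounded (Metric.closedBall (0 : V) R)) : FiniteDimensional 𝕜 V := by
  by_contra hfin
  obtain ⟨R, f, -, hfR, hsep⟩ := exists_seq_norm_le_one_le_norm_sub hfin
  obtain ⟨m, n, hmn, hlt⟩ :=
    (h R).exists_ne_dist_lt one_pos (f := f) fun n => mem_closedBall_zero_iff.2 (hfR n)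
  exact (hsep hmn).not_gt (by rwa [← dist_eq_norm])

theorem unifNull_of_forall_eq_zero {χ : ℕ → E →L[𝕜] 𝕜} {B : Set E}
    (hB : ∀ x ∈ B, ∀ n, χ n x = 0) : UnifNull χ B := by
  have hzero : (fun n => ⨆ x : B, ‖χ n (x : E)‖) = fun _ => 0 := by
    funext n
    simp only [hB _ (Subtype.prop _), norm_zero, Real.iSup_const_zero]
  rw [UnifNull, hzero]
  exact tendsto_const_nhds

theorem stmt12_general (χ : ℕ → E →L[𝕜] 𝕜)
    (h : ∀ B : Set E, IsBounded B → UnifNull χ B → TotallyBounded B) :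
    FiniteDimensional 𝕜 ↥(⨅ n : ℕ, LinearMap.ker (χ n : E →ₗ[𝕜] 𝕜)) := by
  set Z := ⨅ n : ℕ, LinearMap.ker (χ n : E →ₗ[𝕜] 𝕜)
  refine .of_forall_totallyBounded_closedBall 𝕜 fun R => ?_
  have hball : TotallyBounded ((↑) '' Metric.closedBall (0 : Z) R : Set E) := by
    refine h _ (isometry_subtype_coe.lipschitz.isBounded_image Metric.isBounded_closedBall)
      (unifNull_of_forall_eq_zero ?_)
    rintro _ ⟨z, -, rfl⟩ n
    exact Submodule.mem_iInf _ |>.1 z.2 n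
  exact (totallyBounded_image_iff isometry_subtype_coe.isUniformInducing).1 hball

theorem stmt12 [CompleteSpace E] (χ : ℕ → E →L[𝕜] 𝕜) (hχ : WeakStarNull χ)
    (h : ∀ B : Set E, IsBounded B → UnifNull χ B → TotallyBounded B) :
    FiniteDimensional 𝕜 ↥(⨅ n : ℕ, LinearMap.ker (χ n : E →ₗ[𝕜] 𝕜)) :=
  stmt12_general χ h
end
end

section
/- If K is an infinite compact Hausdorff space such that C(K) has the Grothendieck property, then the Banach space C(K) is not Gelfand–Phillips. -/
open Filter Topology Bornology

noncomputable section

variable {𝕜 E F : Type*} [RCLike 𝕜] [NormedAddCommGroup E] [NormedSpace 𝕜 E]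
  [NormedAddCommGroup F] [NormedSpace 𝕜 F]

/-!
Disjoint Urysohn bumps `e k` in `C(K)` span an isometric copy of `c₀`, so for every functional `μ`
the sequence `(μ (e k))_k` lies in `ℓ¹` with norm at most `‖μ‖`, and each bounded scalar sequence
`b` defines a functional `μ ↦ ∑ b k μ (e k)` on the dual. If `χ n` is weak* null, the Grothendieck
property makes `∑ b k χ n (e k)` tend to `0` for every such `b`, i.e. `(χ n (e k))_k` is weakly null
in `ℓ¹`; by the Schur property (a gliding hump argument) it is norm null, so `χ n → 0` uniformly on
`{e k}`. Thus `{e k}` is limited, while it is `1`-separated and hence not relatively compact.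
-/

def conjPhase (z : 𝕜) : 𝕜 := starRingEnd 𝕜 z / ‖z‖

lemma norm_conjPhase_le_one (z : 𝕜) : ‖conjPhase z‖ ≤ 1 := by
  rw [conjPhase, norm_div, RCLike.norm_conj, RCLike.norm_ofReal, abs_norm]
  exact div_self_le_one _

lemma conjPhase_mul_self (z : 𝕜) : conjPhase z * z = ‖z‖ := by
  rcases eq_or_ne z 0 with rfl | hz
  · simp [conjPhase]
  · rw [conjPhase, div_mul_eq_mul_div, RCLike.conj_mul, sq,
      mul_div_cancel_right₀ _ (RCLike.ofReal_ne_zero.2 (norm_ne_zero_iff.2 hz))]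

lemma sum_Ico_sub_le_norm_tsum_mul {f b : ℕ → 𝕜} (hf : Summable fun k => ‖f k‖)
    (hb : ∀ k, ‖b k‖ ≤ 1) {M N : ℕ} (hMN : M ≤ N)
    (hbf : ∀ k ∈ Finset.Ico M N, b k * f k = ‖f k‖) :
    ∑ k ∈ Finset.Ico M N, ‖f k‖ - ∑ k ∈ Finset.range M, ‖f k‖ - ∑' k, ‖f (k + N)‖ ≤
      ‖∑' k, b k * f k‖ := by
  set g : ℕ → 𝕜 := fun k => b k * f k
  have hg : ∀ k, ‖g k‖ ≤ ‖f k‖ := fun k => by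
    simpa only [g, norm_mul] using mul_le_of_le_one_left (norm_nonneg _) (hb k)
  have hsplit : ∑' k, g k = ∑ k ∈ Finset.range M, g k + ∑ k ∈ Finset.Ico M N, g k +
      ∑' k, g (k + N) := by
    rw [Finset.sum_range_add_sum_Ico _ hMN, (hf.of_norm_bounded hg).sum_add_tsum_nat_add]
  have hblock : ‖∑ k ∈ Finset.Ico M N, g k‖ = ∑ k ∈ Finset.Ico M N, ‖f k‖ := by
    rw [Finset.sum_congr rfl hbf, ← RCLike.ofReal_sum, RCLike.norm_ofReal,
      abs_of_nonneg (Finset.sum_nonneg fun _ _ => norm_nonneg _)]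
  have hhead : ‖∑ k ∈ Finset.range M, g k‖ ≤ ∑ k ∈ Finset.range M, ‖f k‖ :=
    (norm_sum_le _ _).trans (Finset.sum_le_sum fun k _ => hg k)
  have htail : ‖∑' k, g (k + N)‖ ≤ ∑' k, ‖f (k + N)‖ :=
    tsum_of_norm_bounded ((summable_nat_add_iff N).2 hf).hasSum fun k => hg (k + N)
  have hblock_eq : ∑ k ∈ Finset.Ico M N, g k =
      ∑' k, g k - ∑ k ∈ Finset.range M, g k - ∑' k, g (k + N) := by
    rw [hsplit]; ring
  have := norm_sub_le (∑' k, g k - ∑ k ∈ Finset.range M, g k) (∑' k, g (k + N))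
  have := norm_sub_le (∑' k, g k) (∑ k ∈ Finset.range M, g k)
  rw [← hblock, hblock_eq]
  linarith

lemma exists_gliding_hump_step {a : ℕ → ℕ → 𝕜} (hs : ∀ n, Summable fun k => ‖a n k‖)
    (hcoord : ∀ k, Tendsto (fun n => a n k) atTop (𝓝 0)) {ε : ℝ} (hε : 0 < ε)
    (hfreq : ∃ᶠ n in atTop, ε ≤ ∑' k, ‖a n k‖) (n₀ M : ℕ) :
    ∃ n N, n₀ < n ∧ M ≤ N ∧ ∑ k ∈ Finset.range M, ‖a n k‖ < ε / 8 ∧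
      ∑' k, ‖a n (k + N)‖ < ε / 8 ∧ 3 * ε / 4 ≤ ∑ k ∈ Finset.Ico M N, ‖a n k‖ := by
  have hhead : Tendsto (fun n => ∑ k ∈ Finset.range M, ‖a n k‖) atTop (𝓝 0) := by
    simpa using tendsto_finsetSum _ fun k _ => (hcoord k).norm
  have hε8 : (0 : ℝ) < ε / 8 := by positivity
  obtain ⟨n, htotal, hhead_n, hn₀⟩ := (hfreq.and_eventually
    ((hhead.eventually_lt_const hε8).and (eventually_gt_atTop n₀))).exists
  obtain ⟨N, htail, hMN⟩ := (((tendsto_sum_nat_add fun k => ‖a n k‖).eventually_lt_const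
    hε8).and (eventually_ge_atTop M)).exists
  refine ⟨n, N, hn₀, hMN, hhead_n, htail, ?_⟩
  have hsplit := (hs n).sum_add_tsum_nat_add N
  rw [← Finset.sum_range_add_sum_Ico _ hMN] at hsplit
  linarith

lemma exists_forall_mem_Ico_eq {α : Type*} {s : Set α} {d : α} (hd : d ∈ s)
    {c : ℕ → ℕ → α} (hc : ∀ i k, c i k ∈ s) {N : ℕ → ℕ} (hN : Monotone N) :
    ∃ b : ℕ → α, (∀ k, b k ∈ s) ∧ ∀ i, ∀ k ∈ Set.Ico (N i) (N (i + 1)), b k = c i k := by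
  classical
  refine ⟨fun k => if h : ∃ i, k ∈ Set.Ico (N i) (N (i + 1)) then c h.choose k else d,
    fun k => by dsimp only; split_ifs; exacts [hc _ _, hd], fun i k hk => ?_⟩
  have h : ∃ i, k ∈ Set.Ico (N i) (N (i + 1)) := ⟨i, hk⟩
  have hi : h.choose = i := by
    by_contra hne
    exact Set.disjoint_left.1 (hN.pairwise_disjoint_on_Ico_succ hne) h.choose_spec hk
  simp only [dif_pos h, hi]

/-- The Schur property of `ℓ¹`, with the dual `ℓ^∞` acting by `b ↦ ∑ b k * a k`. -/
theorem tendsto_tsum_norm_of_tendsto_tsum_mul {a : ℕ → ℕ → 𝕜}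
    (hs : ∀ n, Summable fun k => ‖a n k‖)
    (h : ∀ b : ℕ → 𝕜, (∀ k, ‖b k‖ ≤ 1) → Tendsto (fun n => ∑' k, b k * a n k) atTop (𝓝 0)) :
    Tendsto (fun n => ∑' k, ‖a n k‖) atTop (𝓝 0) := by
  have hcoord : ∀ k, Tendsto (fun n => a n k) atTop (𝓝 0) := fun k => by
    simpa [Pi.single_apply] using
      h (Pi.single k 1) fun j => by rcases eq_or_ne j k with rfl | hj <;> simp [*]
  by_contra hnot
  obtain ⟨ε, hε, hfreq⟩ : ∃ ε > 0, ∃ᶠ n in atTop, ε ≤ ∑' k, ‖a n k‖ := by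
    obtain ⟨S, hS, hfreq⟩ := not_tendsto_iff_exists_frequently_notMem.1 hnot
    obtain ⟨ε, hε, hball⟩ := Metric.mem_nhds_iff.1 hS
    refine ⟨ε, hε, hfreq.mono fun n hn => ?_⟩
    simpa [abs_of_nonneg (tsum_nonneg fun k => norm_nonneg (a n k))] using
      fun h => hn (hball h)
  choose nxt Nxt hstep using exists_gliding_hump_step hs hcoord hε hfreq
  let seq : ℕ → ℕ × ℕ := fun i => Nat.rec (0, 0) (fun _ p => (nxt p.1 p.2, Nxt p.1 p.2)) i
  set n : ℕ → ℕ := fun i => (seq i).1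
  set N : ℕ → ℕ := fun i => (seq i).2
  have hseq : ∀ i, n i < n (i + 1) ∧ N i ≤ N (i + 1) ∧
      ∑ k ∈ Finset.range (N i), ‖a (n (i + 1)) k‖ < ε / 8 ∧
      ∑' k, ‖a (n (i + 1)) (k + N (i + 1))‖ < ε / 8 ∧
      3 * ε / 4 ≤ ∑ k ∈ Finset.Ico (N i) (N (i + 1)), ‖a (n (i + 1)) k‖ :=
    fun i => hstep (n i) (N i)
  have hN : Monotone N := monotone_nat_of_le_succ fun i => (hseq i).2.1
  have hn : StrictMono fun i => n (i + 1) := strictMono_nat_of_lt_succ fun i => (hseq (i + 1)).1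
  obtain ⟨b, hb, hbeq⟩ := exists_forall_mem_Ico_eq (s := Metric.closedBall (0 : 𝕜) 1)
    (d := 0) (by simp) (c := fun i k => conjPhase (a (n (i + 1)) k))
    (fun _ _ => mem_closedBall_zero_iff.2 (norm_conjPhase_le_one _)) hN
  replace hb : ∀ k, ‖b k‖ ≤ 1 := fun k => mem_closedBall_zero_iff.1 (hb k)
  -- `b` aligns the phases of `a (n (i + 1))` on the `i`-th block, which carries at least `3ε/4`
  -- of its mass, while head and tail carry less than `ε/4`.
  have hlarge : ∀ i, ε / 2 ≤ ‖∑' k, b k * a (n (i + 1)) k‖ := fun i => by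
    obtain ⟨-, hNi, hhead, htail, hblock⟩ := hseq i
    have := sum_Ico_sub_le_norm_tsum_mul (hs (n (i + 1))) hb hNi fun k hk => by
      rw [hbeq i k (Set.mem_Ico.2 (Finset.mem_Ico.1 hk)), conjPhase_mul_self]
    linarith
  have hsmall : Tendsto (fun i => ‖∑' k, b k * a (n (i + 1)) k‖) atTop (𝓝 0) := by
    simpa using ((h b hb).comp hn.tendsto_atTop).norm
  obtain ⟨i, hi⟩ := (hsmall.eventually_lt_const (by positivity : (0 : ℝ) < ε / 2)).exists
  exact (hlarge i).not_gt hi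

variable (𝕜) in
/-- The unit vector basis of `c₀` dominates `e` with constant `1`. -/
def DominatedByC0 (e : ℕ → E) : Prop :=
  ∀ (S : Finset ℕ) (b : ℕ → 𝕜), (∀ k, ‖b k‖ ≤ 1) → ‖∑ k ∈ S, b k • e k‖ ≤ 1

variable (𝕜 E) in
def GrothendieckSpace : Prop :=
  ∀ μ : ℕ → E →L[𝕜] 𝕜, WeakStarNull μ →
    ∀ Φ : (E →L[𝕜] 𝕜) →L[𝕜] 𝕜, Tendsto (fun n => Φ (μ n)) atTop (𝓝 0)

namespace DominatedByC0

variable {e : ℕ → E} (he : DominatedByC0 𝕜 e)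
include he

lemma norm_le_one (k : ℕ) : ‖e k‖ ≤ 1 := by
  simpa using he {k} 1 fun _ => norm_one.le

lemma isBounded_range : IsBounded (Set.range e) :=
  isBounded_iff_forall_norm_le.2 ⟨1, by rintro _ ⟨k, rfl⟩; exact he.norm_le_one k⟩

lemma sum_norm_apply_le (μ : E →L[𝕜] 𝕜) (S : Finset ℕ) : ∑ k ∈ S, ‖μ (e k)‖ ≤ ‖μ‖ := by
  have hμ : μ (∑ k ∈ S, conjPhase (μ (e k)) • e k) = ((∑ k ∈ S, ‖μ (e k)‖ : ℝ) : 𝕜) := by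
    simp only [map_sum, map_smul, smul_eq_mul, conjPhase_mul_self]
  calc ∑ k ∈ S, ‖μ (e k)‖ = ‖μ (∑ k ∈ S, conjPhase (μ (e k)) • e k)‖ := by
        rw [hμ, RCLike.norm_ofReal, abs_of_nonneg (Finset.sum_nonneg fun _ _ => norm_nonneg _)]
    _ ≤ ‖μ‖ * 1 := μ.le_opNorm_of_le (he S _ fun _ => norm_conjPhase_le_one _)
    _ = ‖μ‖ := mul_one _

lemma summable_norm_apply (μ : E →L[𝕜] 𝕜) : Summable fun k => ‖μ (e k)‖ :=
  summable_of_sum_le (fun _ => norm_nonneg _) (he.sum_norm_apply_le μ)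

lemma tsum_norm_apply_le (μ : E →L[𝕜] 𝕜) : ∑' k, ‖μ (e k)‖ ≤ ‖μ‖ :=
  tsum_le_of_sum_le' (norm_nonneg μ) (he.sum_norm_apply_le μ)

lemma exists_dual_apply_eq_tsum {b : ℕ → 𝕜} (hb : ∀ k, ‖b k‖ ≤ 1) :
    ∃ Φ : (E →L[𝕜] 𝕜) →L[𝕜] 𝕜, ∀ μ, Φ μ = ∑' k, b k * μ (e k) := by
  have hbound : ∀ (μ : E →L[𝕜] 𝕜) k, ‖b k * μ (e k)‖ ≤ ‖μ (e k)‖ := fun μ k => by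
    simpa only [norm_mul] using mul_le_of_le_one_left (norm_nonneg _) (hb k)
  have hsum : ∀ μ : E →L[𝕜] 𝕜, Summable fun k => b k * μ (e k) := fun μ =>
    (he.summable_norm_apply μ).of_norm_bounded (hbound μ)
  refine ⟨LinearMap.mkContinuous
    { toFun := fun μ => ∑' k, b k * μ (e k)
      map_add' := fun μ ν => by
        simp only [add_apply, mul_add]
        exact (hsum μ).tsum_add (hsum ν)
      map_smul' := fun c μ => by
        simp only [smul_apply, smul_eq_mul, RingHom.id_apply,
          mul_left_comm _ c]
        exact tsum_mul_left } 1 fun μ => ?_, fun μ => rfl⟩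
  rw [one_mul]
  exact (tsum_of_norm_bounded (he.summable_norm_apply μ).hasSum (hbound μ)).trans
    (he.tsum_norm_apply_le μ)

theorem limited_range (hGr : GrothendieckSpace 𝕜 E) : Limited 𝕜 (Set.range e) := by
  intro χ hχ
  have hsum : Tendsto (fun n => ∑' k, ‖χ n (e k)‖) atTop (𝓝 0) :=
    tendsto_tsum_norm_of_tendsto_tsum_mul (fun n => he.summable_norm_apply (χ n))
      fun b hb => by
        obtain ⟨Φ, hΦ⟩ := he.exists_dual_apply_eq_tsum hb
        simpa only [hΦ] using hGr χ hχ Φ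
  refine squeeze_zero (fun n => Real.iSup_nonneg fun _ => norm_nonneg _) (fun n => ?_) hsum
  refine Real.iSup_le ?_ (tsum_nonneg fun _ => norm_nonneg _)
  rintro ⟨_, k, rfl⟩
  exact (he.summable_norm_apply (χ n)).le_tsum k fun _ _ => norm_nonneg _

end DominatedByC0

lemma not_totallyBounded_range_of_pairwise_le_dist {X : Type*} [PseudoMetricSpace X]
    {e : ℕ → X} {δ : ℝ} (hδ : 0 < δ) (he : Pairwise fun k j => δ ≤ dist (e k) (e j)) :
    ¬ TotallyBounded (Set.range e) := by
  intro h
  obtain ⟨t, ht, hcover⟩ := Metric.totallyBounded_iff.1 h (δ / 2) (half_pos hδ)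
  have hnear : ∀ k, ∃ y : t, dist (e k) y < δ / 2 := fun k => by
    simpa using hcover ⟨k, rfl⟩
  choose y hy using hnear
  have := ht.to_subtype
  obtain ⟨k, j, hkj, hyk⟩ := Finite.exists_ne_map_eq_of_infinite y
  have := dist_triangle_right (e k) (e j) (y k)
  linarith [he hkj, hy k, hy j, hyk ▸ hy j]

section ContinuousMap

open Set Function

lemma exists_seq_pairwise_disjoint_isOpen_nonempty {X : Type*} [TopologicalSpace X]
    [T2Space X] (x : X) [(𝓝[≠] x).NeBot] :
    ∃ U : ℕ → Set X, (∀ i, IsOpen (U i)) ∧ (∀ i, (U i).Nonempty) ∧ Pairwise (Disjoint on U) := by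
  have hsplit : ∀ V : {V : Set X // IsOpen V ∧ x ∈ V}, ∃ W : {V : Set X // IsOpen V ∧ x ∈ V},
      ∃ U : Set X, IsOpen U ∧ U.Nonempty ∧ U ⊆ V ∧ W.1 ⊆ V ∧ Disjoint U W := by
    rintro ⟨V, hVo, hxV⟩
    obtain ⟨y, hyV, hyx⟩ : (V ∩ {x}ᶜ).Nonempty :=
      nonempty_of_mem (inter_mem (mem_nhdsWithin_of_mem_nhds (hVo.mem_nhds hxV))
        self_mem_nhdsWithin)
    obtain ⟨A, B, hA, hB, hyA, hxB, hAB⟩ := t2_separation hyx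
    exact ⟨⟨B ∩ V, hB.inter hVo, hxB, hxV⟩, A ∩ V, hA.inter hVo, ⟨y, hyA, hyV⟩,
      inter_subset_right, inter_subset_right, hAB.mono inter_subset_left inter_subset_left⟩
  choose next U hUo hUne hUV hnext hdisj using hsplit
  let W : ℕ → {V : Set X // IsOpen V ∧ x ∈ V} :=
    fun i => Nat.rec ⟨univ, isOpen_univ, mem_univ x⟩ (fun _ V => next V) i
  have hW : Antitone fun i => (W i).1 := antitone_nat_of_succ_le fun i => hnext (W i)
  refine ⟨fun i => U (W i), fun i => hUo _, fun i => hUne _,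
    (pairwise_disjoint_on _).2 fun i j hij => ?_⟩
  exact (hdisj (W i)).mono_right ((hUV (W j)).trans (hW (Nat.succ_le_of_lt hij)))

variable {K : Type*} [TopologicalSpace K] [CompactSpace K]

lemma exists_norm_le_one_support_subset [T2Space K] {U : Set K} (hU : IsOpen U)
    (hne : U.Nonempty) : ∃ f : C(K, 𝕜), ‖f‖ ≤ 1 ∧ support f ⊆ U ∧ ∃ x, f x = 1 := by
  obtain ⟨x, hx⟩ := hne
  obtain ⟨f, hf0, hf1, hf01⟩ := exists_continuous_zero_one_of_isClosed hU.isClosed_compl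
    isClosed_singleton (disjoint_singleton_right.2 (not_not_intro hx))
  refine ⟨⟨fun z => (f z : 𝕜), by fun_prop⟩, (ContinuousMap.norm_le _ zero_le_one).2 fun z => ?_,
    fun z hz => by_contra fun hzU => hz ?_, x, by simp [hf1 rfl]⟩
  · simpa [abs_of_nonneg (hf01 z).1] using (hf01 z).2
  · simp [hf0 hzU]

lemma dominatedByC0_of_pairwise_disjoint_support {f : ℕ → C(K, 𝕜)} (hf : ∀ k, ‖f k‖ ≤ 1)
    (hdisj : Pairwise (Disjoint on fun k => support (f k))) : DominatedByC0 𝕜 f := by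
  intro S b hb
  refine (ContinuousMap.norm_le _ zero_le_one).2 fun x => ?_
  simp only [ContinuousMap.coe_sum, ContinuousMap.coe_smul, Finset.sum_apply, Pi.smul_apply,
    smul_eq_mul]
  by_cases hx : ∃ k ∈ S, f k x ≠ 0
  · obtain ⟨k, hk, hkx⟩ := hx
    rw [Finset.sum_eq_single_of_mem k hk fun j _ hjk => ?_]
    · rw [norm_mul]
      exact mul_le_one₀ (hb k) (norm_nonneg _) (((f k).norm_coe_le_norm x).trans (hf k))
    · rw [notMem_support.1 fun hjx => disjoint_left.1 (hdisj hjk) hjx hkx, mul_zero]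
  · push Not at hx
    rw [Finset.sum_eq_zero fun k hk => by rw [hx k hk, mul_zero], norm_zero]
    exact zero_le_one

variable (K) in
theorem exists_dominatedByC0_pairwise_one_le_dist [T2Space K] [Infinite K] :
    ∃ e : ℕ → C(K, 𝕜), DominatedByC0 𝕜 e ∧ Pairwise fun k j => 1 ≤ dist (e k) (e j) := by
  obtain ⟨x, hx⟩ := exists_nhds_ne_neBot K
  obtain ⟨U, hUo, hUne, hUdisj⟩ := exists_seq_pairwise_disjoint_isOpen_nonempty x
  choose e he1 heU y hy using fun k => exists_norm_le_one_support_subset (𝕜 := 𝕜) (hUo k) (hUne k)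
  have hdisj : Pairwise (Disjoint on fun k => support (e k)) := fun k j hkj =>
    (hUdisj hkj).mono (heU k) (heU j)
  refine ⟨e, dominatedByC0_of_pairwise_disjoint_support he1 hdisj, fun k j hkj => ?_⟩
  have hjy : e j (y k) = 0 :=
    notMem_support.1 fun h => disjoint_left.1 (hdisj hkj) (by simp [hy k]) h
  calc (1 : ℝ) = ‖(e k - e j) (y k)‖ := by simp [hy k, hjy]
    _ ≤ dist (e k) (e j) := dist_eq_norm (e k) (e j) ▸ ContinuousMap.norm_coe_le_norm _ _

end ContinuousMap

theorem stmt17 {𝕜 : Type*} [RCLike 𝕜] (K : Type*) [TopologicalSpace K]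
    [CompactSpace K] [T2Space K] [Infinite K]
    (hGr : ∀ μ : ℕ → C(K, 𝕜) →L[𝕜] 𝕜,
      (∀ f : C(K, 𝕜), Tendsto (fun n => μ n f) atTop (𝓝 0)) →
      ∀ Φ : (C(K, 𝕜) →L[𝕜] 𝕜) →L[𝕜] 𝕜, Tendsto (fun n => Φ (μ n)) atTop (𝓝 0)) :
    ¬ GelfandPhillips 𝕜 C(K, 𝕜) := by
  obtain ⟨e, he, hsep⟩ := exists_dominatedByC0_pairwise_one_le_dist (𝕜 := 𝕜) K
  exact fun hGP => not_totallyBounded_range_of_pairwise_le_dist one_pos hsep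
    (hGP _ he.isBounded_range (he.limited_range hGr))
end
end

section
/- Let E be a Banach space such that the closed unit ball of E' is sequentially compact in the weak* topology. Then E is Gelfand–Phillips. -/
/-!
Suppose `B` is bounded and limited. If the dual unit ball were not totally bounded for the
seminorm `f ↦ sup_{x ∈ B} ‖f x‖`, it would contain a sequence that is uniformly separated on `B`;
a weak* convergent subsequence `f (φ k) → g` then yields the weak* null sequence `f (φ k) - g`,
which must tend to `0` uniformly on `B`, a contradiction. So finitely many functionals `G`
approximate the whole dual ball on `B` to within `δ`. Along any sequence in `B` the finitely many
bounded scalar sequences `g (x n)`, `g ∈ G`, have two terms `m < n` that are `δ`-close, and by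
Hahn–Banach `‖x m - x n‖` is then less than `3 δ`. Hence `B` is totally bounded.
-/

open Filter Topology Bornology

noncomputable section

variable {𝕜 E F : Type*} [RCLike 𝕜] [NormedAddCommGroup E] [NormedSpace 𝕜 E]
  [NormedAddCommGroup F] [NormedSpace 𝕜 F]

open Set

variable (𝕜 E) in
def WeakStarSeqCompactBall : Prop :=
  ∀ χ : ℕ → E →L[𝕜] 𝕜, (∀ n, ‖χ n‖ ≤ 1) →
    ∃ (f : E →L[𝕜] 𝕜) (φ : ℕ → ℕ), StrictMono φ ∧
      ∀ x : E, Tendsto (fun k => χ (φ k) x) atTop (𝓝 (f x))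

theorem Metric.totallyBounded_of_forall_exists_lt_dist_lt {α : Type*} [PseudoMetricSpace α]
    {s : Set α} (h : ∀ ε > 0, ∀ u : ℕ → α, (∀ n, u n ∈ s) → ∃ m n, m < n ∧ dist (u m) (u n) < ε) :
    TotallyBounded s := by
  rw [Metric.totallyBounded_iff]
  intro ε hε
  by_contra! hcover
  obtain ⟨u, hus, hsep⟩ := exists_seq_of_forall_finset_exists (· ∈ s)
    (fun x y => ε ≤ dist x y) fun t _ => by
      obtain ⟨y, hys, hy⟩ := not_subset.mp (hcover t t.finite_toSet)
      refine ⟨y, hys, fun x hx => ?_⟩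
      by_contra! hxy
      exact hy (mem_biUnion hx (Metric.mem_ball'.mpr hxy))
  obtain ⟨m, n, hmn, hclose⟩ := h ε hε u hus
  exact (hsep m n hmn).not_gt hclose

theorem exists_lt_dist_lt_of_isBounded_range {α : Type*} [PseudoMetricSpace α] [ProperSpace α]
    {u : ℕ → α} (hu : IsBounded (range u)) {δ : ℝ} (hδ : 0 < δ) :
    ∃ m n, m < n ∧ dist (u m) (u n) < δ := by
  obtain ⟨_, _, φ, hφ, hlim⟩ := tendsto_subseq_of_bounded hu (mem_range_self ·)
  obtain ⟨N, hN⟩ := Metric.cauchySeq_iff.mp hlim.cauchySeq δ hδ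
  exact ⟨φ N, φ (N + 1), hφ N.lt_succ_self, hN N le_rfl (N + 1) N.le_succ⟩

theorem Finset.exists_lt_forall_norm_sub_lt (G : Finset (E →L[𝕜] 𝕜)) {x : ℕ → E}
    (hx : IsBounded (Set.range x)) {δ : ℝ} (hδ : 0 < δ) :
    ∃ m n, m < n ∧ ∀ g ∈ G, ‖g (x m) - g (x n)‖ < δ := by
  let T : E →L[𝕜] (G → 𝕜) := ContinuousLinearMap.pi fun g => g
  have hTx : IsBounded (Set.range (T ∘ x)) := by
    rw [range_comp]
    exact T.lipschitz.isBounded_image hx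
  obtain ⟨m, n, hmn, hclose⟩ := exists_lt_dist_lt_of_isBounded_range hTx hδ
  refine ⟨m, n, hmn, fun g hg => ?_⟩
  rw [← dist_eq_norm]
  exact (dist_le_pi_dist (T (x m)) (T (x n)) ⟨g, hg⟩).trans_lt hclose

theorem UnifNull.eventually_forall_norm_lt {χ : ℕ → E →L[𝕜] 𝕜} {B : Set E} (hB : IsBounded B)
    (h : UnifNull χ B) {δ : ℝ} (hδ : 0 < δ) : ∀ᶠ k in atTop, ∀ x ∈ B, ‖χ k x‖ < δ := by
  obtain ⟨R, hR⟩ := hB.exists_norm_le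
  filter_upwards [h.eventually_lt_const hδ] with k hk x hx
  have hbdd : BddAbove (range fun p : B => ‖χ k p‖) := by
    refine ⟨‖χ k‖ * R, forall_mem_range.mpr fun p => ?_⟩
    exact (χ k).le_of_opNorm_le_of_le le_rfl (hR p p.2)
  exact (le_ciSup hbdd ⟨x, hx⟩).trans_lt hk

theorem Limited.exists_lt_forall_norm_sub_lt (hsc : WeakStarSeqCompactBall 𝕜 E) {B : Set E}
    (hB : IsBounded B) (hlim : Limited 𝕜 B) {f : ℕ → E →L[𝕜] 𝕜} (hf : ∀ n, ‖f n‖ ≤ 1)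
    {δ : ℝ} (hδ : 0 < δ) : ∃ m n, m < n ∧ ∀ x ∈ B, ‖f m x - f n x‖ < δ := by
  obtain ⟨g, φ, hφ, hconv⟩ := hsc f hf
  have hnull : WeakStarNull fun k => f (φ k) - g := fun x => by
    simpa using (hconv x).sub_const (g x)
  obtain ⟨K, hK⟩ :=
    ((hlim _ hnull).eventually_forall_norm_lt hB (half_pos hδ)).exists_forall_of_atTop
  refine ⟨φ K, φ (K + 1), hφ K.lt_succ_self, fun x hx => ?_⟩
  calc ‖f (φ K) x - f (φ (K + 1)) x‖ = ‖(f (φ K) - g) x - (f (φ (K + 1)) - g) x‖ := by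
        simp only [sub_apply, sub_sub_sub_cancel_right]
    _ ≤ ‖(f (φ K) - g) x‖ + ‖(f (φ (K + 1)) - g) x‖ := norm_sub_le _ _
    _ < δ / 2 + δ / 2 := add_lt_add (hK K le_rfl x hx) (hK (K + 1) K.le_succ x hx)
    _ = δ := add_halves δ

theorem Limited.exists_finset_dual_net (hsc : WeakStarSeqCompactBall 𝕜 E) {B : Set E}
    (hB : IsBounded B) (hlim : Limited 𝕜 B) {δ : ℝ} (hδ : 0 < δ) :
    ∃ G : Finset (E →L[𝕜] 𝕜), ∀ f : E →L[𝕜] 𝕜, ‖f‖ ≤ 1 →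
      ∃ g ∈ G, ∀ x ∈ B, ‖f x - g x‖ < δ := by
  by_contra! hnet
  obtain ⟨f, hf, hsep⟩ := exists_seq_of_forall_finset_exists (fun f : E →L[𝕜] 𝕜 => ‖f‖ ≤ 1)
    (fun g f => ∃ x ∈ B, δ ≤ ‖g x - f x‖) fun G _ => by
      obtain ⟨f, hf, hfG⟩ := hnet G
      exact ⟨f, hf, fun g hg => by simpa only [norm_sub_rev] using hfG g hg⟩
  obtain ⟨m, n, hmn, hclose⟩ := hlim.exists_lt_forall_norm_sub_lt hsc hB hf hδ
  obtain ⟨x, hx, hfar⟩ := hsep m n hmn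
  exact hfar.not_gt (hclose x hx)

theorem norm_sub_lt_of_dual_net {G : Finset (E →L[𝕜] 𝕜)} {B : Set E} {δ : ℝ}
    (hG : ∀ f : E →L[𝕜] 𝕜, ‖f‖ ≤ 1 → ∃ g ∈ G, ∀ x ∈ B, ‖f x - g x‖ < δ) {x y : E}
    (hx : x ∈ B) (hy : y ∈ B) (hxy : ∀ g ∈ G, ‖g x - g y‖ < δ) : ‖x - y‖ < 3 * δ := by
  obtain ⟨f, hf, hfxy⟩ := exists_dual_vector'' 𝕜 (x - y)
  obtain ⟨g, hg, hfg⟩ := hG f hf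
  calc ‖x - y‖ = ‖f (x - y)‖ := by rw [hfxy, RCLike.norm_ofReal, abs_norm]
    _ = ‖(f x - g x) + (g x - g y) - (f y - g y)‖ := by rw [map_sub]; abel_nf
    _ ≤ ‖f x - g x‖ + ‖g x - g y‖ + ‖f y - g y‖ := norm_sub_le_of_le (norm_add_le _ _) le_rfl
    _ < δ + δ + δ := add_lt_add (add_lt_add (hfg x hx) (hxy g hg)) (hfg y hy)
    _ = 3 * δ := by ring

theorem stmt18_general
    (hsc : ∀ χ : ℕ → E →L[𝕜] 𝕜, (∀ n, ‖χ n‖ ≤ 1) →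
      ∃ (f : E →L[𝕜] 𝕜) (φ : ℕ → ℕ), StrictMono φ ∧
        ∀ x : E, Tendsto (fun k => χ (φ k) x) atTop (𝓝 (f x))) :
    GelfandPhillips 𝕜 E := by
  intro B hB hlim
  refine Metric.totallyBounded_of_forall_exists_lt_dist_lt fun ε hε x hxB => ?_
  have hδ : 0 < ε / 3 := by positivity
  obtain ⟨G, hG⟩ := hlim.exists_finset_dual_net hsc hB hδ
  obtain ⟨m, n, hmn, hclose⟩ :=
    G.exists_lt_forall_norm_sub_lt (hB.subset (range_subset_iff.mpr hxB)) hδ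
  refine ⟨m, n, hmn, ?_⟩
  rw [dist_eq_norm]
  linarith [norm_sub_lt_of_dual_net hG (hxB m) (hxB n) hclose]

theorem stmt18 [CompleteSpace E]
    (hsc : ∀ χ : ℕ → E →L[𝕜] 𝕜, (∀ n, ‖χ n‖ ≤ 1) →
      ∃ (f : E →L[𝕜] 𝕜) (φ : ℕ → ℕ), StrictMono φ ∧
        ∀ x : E, Tendsto (fun k => χ (φ k) x) atTop (𝓝 (f x))) :
    GelfandPhillips 𝕜 E :=
  stmt18_general hsc
end
end

section
/- Let E be a Banach space and H a closed subspace such that both H and E/H are isomorphic to subspaces of c₀. Then E is isomorphic to a subspace of c₀. (One may use Sobczyk's theorem: every bounded operator from a subspace of a separable Banach space into c₀ extends to the whole space.) -/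
open Filter Topology Bornology

noncomputable section

variable {𝕜 E F : Type*} [RCLike 𝕜] [NormedAddCommGroup E] [NormedSpace 𝕜 E]
  [NormedAddCommGroup F] [NormedSpace 𝕜 F]

/-!
Bounded-below operators into the separable space `c₀` have separable domains, and separability
passes from `H` and `E ⧸ H` to `E`. Sobczyk's theorem then extends `T : H → c₀` to `G : E → c₀`:
extend the coordinate functionals of `T` by Hahn–Banach, then subtract functionals vanishing on
`H` to make the sequence weak* null. This is possible because every weak* cluster point of the
extensions annihilates `H`, and the weak* topology on bounded subsets of the dual of a separable
space is metrizable. Finally `x ↦ (G x, S (x + H))` is bounded below, since a point whose class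
in `E ⧸ H` is small lies close to `H`, where `G` is bounded below, and interleaving coordinates
embeds `c₀ × c₀` isometrically into `c₀`.
-/

open Set TopologicalSpace

namespace czero

def ofTendsto (g : ℕ → 𝕜) (hg : Tendsto g atTop (𝓝 0)) : czero 𝕜 :=
  ⟨⟨g, continuous_of_discreteTopology⟩, by rwa [cocompact_eq_atTop]⟩

@[simp]
lemma ofTendsto_apply (g : ℕ → 𝕜) (hg : Tendsto g atTop (𝓝 0)) (n : ℕ) :
    ofTendsto g hg n = g n :=
  rfl

lemma tendsto_apply (f : czero 𝕜) : Tendsto (fun n => f n) atTop (𝓝 0) := by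
  simpa [cocompact_eq_atTop] using f.zero_at_infty'

lemma norm_apply_le (f : czero 𝕜) (n : ℕ) : ‖f n‖ ≤ ‖f‖ := by
  rw [← ZeroAtInftyContinuousMap.norm_toBCF_eq_norm]
  exact f.toBCF.norm_coe_le_norm n

lemma norm_le_of_forall {f : czero 𝕜} {C : ℝ} (hC : 0 ≤ C) (h : ∀ n, ‖f n‖ ≤ C) : ‖f‖ ≤ C := by
  rw [← ZeroAtInftyContinuousMap.norm_toBCF_eq_norm]
  exact (BoundedContinuousFunction.norm_le hC).mpr h

def extendByZero (N : ℕ) : (Fin N → 𝕜) →ₗ[𝕜] czero 𝕜 where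
  toFun v := ofTendsto (fun n => if h : n < N then v ⟨n, h⟩ else 0) <|
    tendsto_atTop_of_eventually_const (i₀ := N) fun n hn => by simp [Nat.not_lt.mpr hn]
  map_add' v w := by ext n; by_cases h : n < N <;> simp [h]
  map_smul' c v := by ext n; by_cases h : n < N <;> simp [h]

lemma tendsto_extendByZero (f : czero 𝕜) :
    Tendsto (fun N => extendByZero N (fun i => f i)) atTop (𝓝 f) := by
  rw [tendsto_iff_norm_sub_tendsto_zero, Metric.tendsto_atTop]
  intro ε hε
  obtain ⟨N₀, hN₀⟩ := Metric.tendsto_atTop.mp (tendsto_apply f) (ε / 2) (half_pos hε)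
  refine ⟨N₀, fun N hN => ?_⟩
  rw [dist_zero_right, norm_norm]
  refine (norm_le_of_forall (half_pos hε).le fun n => ?_).trans_lt (half_lt_self hε)
  by_cases h : n < N
  · simp [extendByZero, h, (half_pos hε).le]
  · simpa [extendByZero, h] using (hN₀ n (by omega)).le

instance : SeparableSpace (czero 𝕜) := by
  refine (isSeparable_univ_iff).mp <|
    (IsSeparable.iUnion fun N => (IsSeparable.of_separableSpace univ).image
      (extendByZero (𝕜 := 𝕜) N).continuous_of_finiteDimensional).closure.mono fun f _ => ?_
  exact mem_closure_of_tendsto (tendsto_extendByZero f)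
    (Eventually.of_forall fun N => mem_iUnion.mpr ⟨N, mem_image_of_mem _ (mem_univ _)⟩)

def evalCLM (n : ℕ) : czero 𝕜 →L[𝕜] 𝕜 :=
  LinearMap.mkContinuous ⟨⟨fun f => f n, fun _ _ => rfl⟩, fun _ _ => rfl⟩ 1 fun f => by
    simpa using norm_apply_le f n

@[simp]
lemma evalCLM_apply (n : ℕ) (f : czero 𝕜) : evalCLM n f = f n :=
  rfl

lemma norm_evalCLM_le (n : ℕ) : ‖(evalCLM n : czero 𝕜 →L[𝕜] 𝕜)‖ ≤ 1 :=
  LinearMap.mkContinuous_norm_le _ zero_le_one _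

def ofWeakStarNull (χ : ℕ → E →L[𝕜] 𝕜) (hχ : WeakStarNull χ) {C : ℝ} (hC : ∀ n, ‖χ n‖ ≤ C) :
    E →L[𝕜] czero 𝕜 :=
  LinearMap.mkContinuous
    { toFun := fun x => ofTendsto (fun n => χ n x) (hχ x)
      map_add' := fun x y => by ext n; simp
      map_smul' := fun c x => by ext n; simp }
    C fun x => norm_le_of_forall (mul_nonneg ((norm_nonneg _).trans (hC 0)) (norm_nonneg x))
      fun n => (χ n).le_of_opNorm_le (hC n) x

@[simp]
lemma ofWeakStarNull_apply (χ : ℕ → E →L[𝕜] 𝕜) (hχ : WeakStarNull χ) {C : ℝ}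
    (hC : ∀ n, ‖χ n‖ ≤ C) (x : E) (n : ℕ) : ofWeakStarNull χ hχ hC x n = χ n x :=
  rfl

def interleave : czero 𝕜 × czero 𝕜 →L[𝕜] czero 𝕜 :=
  ofWeakStarNull
    (fun n => if Even n then (evalCLM (n / 2)).comp (.fst 𝕜 _ _)
      else (evalCLM (n / 2)).comp (.snd 𝕜 _ _))
    (fun p => by
      have hdiv := Nat.tendsto_div_const_atTop (two_ne_zero (α := ℕ))
      refine squeeze_zero_norm (a := fun n => ‖p.1 (n / 2)‖ + ‖p.2 (n / 2)‖) (fun n => ?_) ?_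
      · dsimp only
        split_ifs <;> simp
      · simpa using ((tendsto_apply p.1).comp hdiv).norm.add ((tendsto_apply p.2).comp hdiv).norm)
    (C := 1) fun n => by
      split_ifs
      · exact (ContinuousLinearMap.opNorm_comp_le _ _).trans
          (mul_le_one₀ (norm_evalCLM_le _) (norm_nonneg _) (ContinuousLinearMap.norm_fst_le ..))
      · exact (ContinuousLinearMap.opNorm_comp_le _ _).trans
          (mul_le_one₀ (norm_evalCLM_le _) (norm_nonneg _) (ContinuousLinearMap.norm_snd_le ..))

lemma interleave_apply (p : czero 𝕜 × czero 𝕜) (n : ℕ) :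
    interleave p n = if Even n then p.1 (n / 2) else p.2 (n / 2) := by
  change (if Even n then _ else _ : czero 𝕜 × czero 𝕜 →L[𝕜] 𝕜) p = _
  split_ifs <;> rfl

lemma norm_le_norm_interleave (p : czero 𝕜 × czero 𝕜) : ‖p‖ ≤ ‖interleave p‖ := by
  refine max_le (norm_le_of_forall (norm_nonneg _) fun m => ?_)
    (norm_le_of_forall (norm_nonneg _) fun m => ?_)
  · have : interleave p (2 * m) = p.1 m := by simp [interleave_apply]
    exact this ▸ norm_apply_le _ _
  · have : interleave p (2 * m + 1) = p.2 m := by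
      simp [interleave_apply, Nat.add_div_of_dvd_right]
    exact this ▸ norm_apply_le _ _

end czero

lemma ContinuousLinearMap.separableSpace_of_mul_norm_le {X : Type*} [SeminormedAddCommGroup X]
    [NormedSpace 𝕜 X] [SeparableSpace F] (T : X →L[𝕜] F) {c : ℝ} (hc : 0 < c)
    (hT : ∀ x, c * ‖x‖ ≤ ‖T x‖) : SeparableSpace X :=
  have : SecondCountableTopology F := UniformSpace.secondCountable_of_separable F
  have := ((T.antilipschitz_of_bound (K := ⟨c⁻¹, inv_nonneg.mpr hc.le⟩) fun x =>
    (le_inv_mul_iff₀ hc).mpr (hT x)).isUniformInducing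
      T.uniformContinuous).isInducing.secondCountableTopology
  SecondCountableTopology.to_separableSpace

lemma Submodule.separableSpace_of_quotient {R M : Type*} [Ring R] [AddCommGroup M] [Module R M]
    [TopologicalSpace M] [IsTopologicalAddGroup M] (S : Submodule R M) [SeparableSpace S]
    [SeparableSpace (M ⧸ S)] : SeparableSpace M := by
  obtain ⟨A, hAc, hAd⟩ := exists_countable_dense S
  obtain ⟨B, hBc, hBd⟩ := exists_countable_dense (M ⧸ S)
  obtain ⟨w, hw⟩ := S.mkQ_surjective.hasRightInverse
  refine ⟨⟨image2 (fun (a : S) b => (a : M) + w b) A B, hAc.image2 hBc _, ?_⟩⟩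
  refine dense_iff_inter_open.mpr fun U hU ⟨u, hu⟩ => ?_
  obtain ⟨_, ⟨v, hvU, rfl⟩, hvB⟩ :=
    hBd.inter_open_nonempty _ (S.isOpenMap_mkQ U hU) ⟨_, mem_image_of_mem _ hu⟩
  have hv : v - w (S.mkQ v) ∈ S := by
    rw [← Submodule.Quotient.mk_eq_zero, Submodule.Quotient.mk_sub]
    exact sub_eq_zero.mpr (hw _).symm
  obtain ⟨a, haU, haA⟩ := hAd.inter_open_nonempty
    ((fun a : S => (a : M) + w (S.mkQ v)) ⁻¹' U) (hU.preimage (by fun_prop)) ⟨⟨_, hv⟩, by simpa⟩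
  exact ⟨_, haU, mem_image2_of_mem haA hvB⟩

lemma Submodule.mul_norm_le_add_mul_norm_mkQ (H : Submodule 𝕜 E) (G : E →L[𝕜] F) {c : ℝ}
    (hc : 0 < c) (hG : ∀ h ∈ H, c * ‖h‖ ≤ ‖G h‖) (x : E) :
    c * ‖x‖ ≤ ‖G x‖ + (‖G‖ + c) * ‖H.mkQ x‖ := by
  have hGc : 0 < ‖G‖ + c := by positivity
  suffices (c * ‖x‖ - ‖G x‖) / (‖G‖ + c) ≤ ‖H.mkQ x‖ by
    rw [div_le_iff₀ hGc] at this
    linarith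
  refine QuotientAddGroup.le_norm_iff.mpr fun m hm => (div_le_iff₀' hGc).mpr ?_
  have hxm : x - m ∈ H := by
    rw [← Submodule.Quotient.mk_eq_zero, Submodule.Quotient.mk_sub]
    exact sub_eq_zero.mpr hm.symm
  have hGxm : ‖G (x - m)‖ ≤ ‖G x‖ + ‖G‖ * ‖m‖ := by
    rw [map_sub]
    exact (norm_sub_le _ _).trans (by gcongr; exact G.le_opNorm m)
  nlinarith [norm_le_norm_sub_add x m, hG _ hxm]

lemma Submodule.exists_mul_norm_le_norm_prod_mkQL {F' : Type*} [NormedAddCommGroup F']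
    [NormedSpace 𝕜 F'] (H : Submodule 𝕜 E) (G : E →L[𝕜] F) (S : E ⧸ H →L[𝕜] F') {c₁ c₂ : ℝ}
    (hc₁ : 0 < c₁) (hc₂ : 0 < c₂) (hG : ∀ h ∈ H, c₁ * ‖h‖ ≤ ‖G h‖)
    (hS : ∀ y, c₂ * ‖y‖ ≤ ‖S y‖) :
    ∃ c > 0, ∀ x, c * ‖x‖ ≤ ‖G.prod (S.comp H.mkQL) x‖ := by
  set A := 1 + (‖G‖ + c₁) / c₂
  have hA : 0 < A := by positivity
  refine ⟨c₁ / A, by positivity, fun x => ?_⟩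
  rw [ContinuousLinearMap.prod_apply, Prod.norm_mk, div_mul_eq_mul_div, div_le_iff₀' hA]
  have hmk : (‖G‖ + c₁) * ‖H.mkQ x‖ ≤ (‖G‖ + c₁) / c₂ * ‖S (H.mkQL x)‖ := by
    rw [div_mul_eq_mul_div, le_div_iff₀ hc₂, mul_assoc, mul_comm _ c₂]
    gcongr
    exact hS _
  calc c₁ * ‖x‖ ≤ ‖G x‖ + (‖G‖ + c₁) * ‖H.mkQ x‖ := H.mul_norm_le_add_mul_norm_mkQ G hc₁ hG x
    _ ≤ ‖G x‖ + (‖G‖ + c₁) / c₂ * ‖S (H.mkQL x)‖ := by gcongr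
    _ ≤ A * max ‖G x‖ ‖(S.comp H.mkQL) x‖ := by
      simp only [A, add_mul, one_mul, ContinuousLinearMap.comp_apply]
      gcongr
      exacts [le_max_left _ _, le_max_right _ _]

lemma weakStarNull_of_dense {χ : ℕ → E →L[𝕜] 𝕜} {C : ℝ} (hC : ∀ n, ‖χ n‖ ≤ C) {s : Set E}
    (hs : Dense s) (h : ∀ y ∈ s, Tendsto (fun n => χ n y) atTop (𝓝 0)) : WeakStarNull χ := by
  have hχ : Equicontinuous fun n => (χ n : E → 𝕜) :=
    ((NormedSpace.equicontinuous_TFAE χ).out 5 1).mp (show ∃ C, ∀ n, ‖χ n‖ ≤ C from ⟨C, hC⟩)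
  exact fun y => closure_minimal h (hχ.isClosed_setOfPred_tendsto continuous_const) (hs y)

/-- For a dense sequence `x`, `weakStarGauge x (f - g)` metrizes the weak* topology on bounded
subsets of the dual. -/
def weakStarGauge (x : ℕ → E) (g : E →L[𝕜] 𝕜) : ℝ :=
  ∑' k, (2 : ℝ)⁻¹ ^ k * min 1 ‖g (x k)‖

section weakStarGauge

variable (x : ℕ → E)

lemma weakStarGauge_term_nonneg (g : E →L[𝕜] 𝕜) (k : ℕ) :
    0 ≤ (2 : ℝ)⁻¹ ^ k * min 1 ‖g (x k)‖ := by
  positivity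

lemma weakStarGauge_term_le (g : E →L[𝕜] 𝕜) (k : ℕ) :
    (2 : ℝ)⁻¹ ^ k * min 1 ‖g (x k)‖ ≤ (2 : ℝ)⁻¹ ^ k :=
  mul_le_of_le_one_right (by positivity) (min_le_left _ _)

lemma summable_weakStarGauge (g : E →L[𝕜] 𝕜) :
    Summable fun k => (2 : ℝ)⁻¹ ^ k * min 1 ‖g (x k)‖ :=
  .of_nonneg_of_le (weakStarGauge_term_nonneg x g) (weakStarGauge_term_le x g)
    (summable_geometric_of_lt_one (by norm_num : (0 : ℝ) ≤ 2⁻¹) (by norm_num))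

lemma weakStarGauge_nonneg (g : E →L[𝕜] 𝕜) : 0 ≤ weakStarGauge x g :=
  tsum_nonneg (weakStarGauge_term_nonneg x g)

@[simp]
lemma weakStarGauge_zero : weakStarGauge x (0 : E →L[𝕜] 𝕜) = 0 := by
  simp [weakStarGauge]

lemma continuous_weakStarGauge :
    Continuous fun ψ : WeakDual 𝕜 E => weakStarGauge x (WeakDual.toStrongDual ψ) := by
  refine continuous_tsum (fun k => ?_)
    (summable_geometric_of_lt_one (by norm_num : (0 : ℝ) ≤ 2⁻¹) (by norm_num)) fun k ψ => ?_
  · exact continuous_const.mul (continuous_const.min (WeakDual.eval_continuous (x k)).norm)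
  · rw [Real.norm_of_nonneg (weakStarGauge_term_nonneg x _ k)]
    exact weakStarGauge_term_le x _ k

lemma tendsto_apply_of_tendsto_weakStarGauge {g : ℕ → E →L[𝕜] 𝕜}
    (hg : Tendsto (fun n => weakStarGauge x (g n)) atTop (𝓝 0)) (k : ℕ) :
    Tendsto (fun n => g n (x k)) atTop (𝓝 0) := by
  have hmin : Tendsto (fun n => min 1 ‖g n (x k)‖) atTop (𝓝 0) := by
    refine squeeze_zero (fun n => by positivity) (fun n => ?_) (by simpa using hg.const_mul (2 ^ k))
    have hk := (summable_weakStarGauge x (g n)).le_tsum k fun j _ => weakStarGauge_term_nonneg x _ j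
    calc min 1 ‖g n (x k)‖ = 2 ^ k * ((2 : ℝ)⁻¹ ^ k * min 1 ‖g n (x k)‖) := by
          rw [← mul_assoc, ← mul_pow, mul_inv_cancel₀ two_ne_zero, one_pow, one_mul]
      _ ≤ 2 ^ k * weakStarGauge x (g n) := by gcongr; exact hk
  refine tendsto_zero_iff_norm_tendsto_zero.mpr (hmin.congr' ?_)
  filter_upwards [hmin.eventually_lt_const one_pos] with n hn
  exact min_eq_right (not_le.mp fun h => hn.not_ge (min_eq_left h).ge).le

lemma weakStarNull_of_tendsto_weakStarGauge (hx : DenseRange x) {g : ℕ → E →L[𝕜] 𝕜} {C : ℝ}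
    (hC : ∀ n, ‖g n‖ ≤ C) (hg : Tendsto (fun n => weakStarGauge x (g n)) atTop (𝓝 0)) :
    WeakStarNull g :=
  weakStarNull_of_dense hC hx <| forall_mem_range.mpr (tendsto_apply_of_tendsto_weakStarGauge x hg)

end weakStarGauge

lemma exists_seq_mem_tendsto_zero {α : Type*} {s : Set α} (hs : s.Nonempty) {P : ℕ → α → ℝ}
    (hP : ∀ n a, 0 ≤ P n a) (h : ∀ ε > 0, ∀ᶠ n in atTop, ∃ a ∈ s, P n a < ε) :
    ∃ a : ℕ → α, (∀ n, a n ∈ s) ∧ Tendsto (fun n => P n (a n)) atTop (𝓝 0) := by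
  have : Nonempty s := hs.to_subtype
  set φ : ℕ → ℝ := fun n => ⨅ a : s, P n a
  have hφ : Tendsto φ atTop (𝓝 0) := by
    refine tendsto_order.2 ⟨fun ε hε => .of_forall fun n => hε.trans_le (le_ciInf fun a => hP n a),
      fun ε hε => (h ε hε).mono fun n ⟨a, ha, hlt⟩ => ?_⟩
    exact (ciInf_le (f := fun a : s => P n a) ⟨0, forall_mem_range.mpr fun a => hP n a⟩
      ⟨a, ha⟩).trans_lt hlt
  choose a ha using fun n : ℕ =>
    exists_lt_of_ciInf_lt (lt_add_of_pos_right (φ n) (Nat.one_div_pos_of_nat (α := ℝ) (n := n)))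
  refine ⟨fun n => a n, fun n => (a n).2, squeeze_zero (fun n => hP _ _) (fun n => (ha n).le) ?_⟩
  simpa using hφ.add tendsto_one_div_add_atTop_nhds_zero_nat

theorem exists_annihilator_weakStarNull_sub [SeparableSpace E] (H : Submodule 𝕜 E)
    {f : ℕ → E →L[𝕜] 𝕜} {M : ℝ} (hf : ∀ n, ‖f n‖ ≤ M)
    (hfH : ∀ y ∈ H, Tendsto (fun n => f n y) atTop (𝓝 0)) :
    ∃ g : ℕ → E →L[𝕜] 𝕜, (∀ n, ‖g n‖ ≤ M) ∧ (∀ n, ∀ y ∈ H, g n y = 0) ∧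
      WeakStarNull fun n => f n - g n := by
  set x := denseSeq E
  set K : Set (WeakDual 𝕜 E) :=
    WeakDual.toStrongDual ⁻¹' Metric.closedBall 0 M ∩ {g | ∀ y ∈ H, g y = 0}
  have hlim : Tendsto (fun n => StrongDual.toWeakDual (f n)) atTop (𝓝ˢ K) := by
    refine (WeakDual.isCompact_closedBall (0 : StrongDual 𝕜 E) M).tendsto_nhdsSet_of_mapClusterPt
      (.of_forall fun n => by simpa using hf n) fun g hg hcl => ⟨hg, fun y hy => ?_⟩
    exact eq_of_nhds_neBot <| (hcl.continuousAt_comp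
      (WeakDual.eval_continuous y).continuousAt).neBot.mono (inf_le_inf_left _ (hfH y hy))
  have hnear : ∀ ε > 0, ∀ᶠ n in atTop, ∃ g ∈ K,
      weakStarGauge x (f n - WeakDual.toStrongDual g) < ε := by
    intro ε hε
    have hopen : IsOpen (⋃ g ∈ K,
        {ψ : WeakDual 𝕜 E | weakStarGauge x (WeakDual.toStrongDual (ψ - g)) < ε}) :=
      isOpen_biUnion fun g _ => isOpen_lt
        ((continuous_weakStarGauge x).comp (continuous_sub_right g)) continuous_const
    filter_upwards [hlim (hopen.mem_nhdsSet.mpr fun g hg => mem_biUnion hg (by simpa using hε))]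
      with n hn
    obtain ⟨g, hg, hn⟩ := mem_iUnion₂.mp hn
    exact ⟨g, hg, by simpa using hn⟩
  obtain ⟨g, hgK, hg⟩ := exists_seq_mem_tendsto_zero
    ⟨0, show (0 : WeakDual 𝕜 E) ∈ K from
      ⟨by simpa using (norm_nonneg _).trans (hf 0), fun _ _ => rfl⟩⟩
    (fun n g => weakStarGauge_nonneg x _) hnear
  refine ⟨fun n => WeakDual.toStrongDual (g n), fun n => by simpa using (hgK n).1,
    fun n => (hgK n).2, weakStarNull_of_tendsto_weakStarGauge x (denseRange_denseSeq E)
      (C := M + M) (fun n => ?_) hg⟩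
  exact (norm_sub_le _ _).trans (add_le_add (hf n) (by simpa using (hgK n).1))

theorem exists_extension_czero [SeparableSpace E] (H : Submodule 𝕜 E) (T : H →L[𝕜] czero 𝕜) :
    ∃ G : E →L[𝕜] czero 𝕜, ∀ h : H, G h = T h := by
  choose f hfT hfnorm using fun n => exists_extension_norm_eq H ((czero.evalCLM n).comp T)
  have hf : ∀ n, ‖f n‖ ≤ ‖T‖ := fun n => (hfnorm n).trans_le <|
    (ContinuousLinearMap.opNorm_comp_le _ _).trans
      (mul_le_of_le_one_left (norm_nonneg _) (czero.norm_evalCLM_le n))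
  obtain ⟨g, hgT, hgH, hnull⟩ := exists_annihilator_weakStarNull_sub H hf fun y hy => by
    simpa [hfT _ ⟨y, hy⟩] using czero.tendsto_apply (T ⟨y, hy⟩)
  refine ⟨czero.ofWeakStarNull _ hnull (C := ‖T‖ + ‖T‖)
    fun n => (norm_sub_le _ _).trans (add_le_add (hf n) (hgT n)), fun h => ?_⟩
  ext n
  simp [hgH n h h.2, hfT]

theorem stmt19_general (H : Submodule 𝕜 E)
    (h1 : ∃ T : H →L[𝕜] czero 𝕜, ∃ c > (0 : ℝ), ∀ x : H, c * ‖x‖ ≤ ‖T x‖)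
    (h2 : ∃ S : (E ⧸ H) →L[𝕜] czero 𝕜, ∃ c > (0 : ℝ), ∀ y : E ⧸ H, c * ‖y‖ ≤ ‖S y‖) :
    ∃ R : E →L[𝕜] czero 𝕜, ∃ c > (0 : ℝ), ∀ x : E, c * ‖x‖ ≤ ‖R x‖ := by
  obtain ⟨T, c₁, hc₁, hT⟩ := h1
  obtain ⟨S, c₂, hc₂, hS⟩ := h2
  have : SeparableSpace H := T.separableSpace_of_mul_norm_le hc₁ hT
  have : SeparableSpace (E ⧸ H) := S.separableSpace_of_mul_norm_le hc₂ hS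
  have : SeparableSpace E := H.separableSpace_of_quotient
  obtain ⟨G, hG⟩ := exists_extension_czero H T
  obtain ⟨c, hc, hGS⟩ := H.exists_mul_norm_le_norm_prod_mkQL G S hc₁ hc₂
    (fun h hh => by simpa [hG ⟨h, hh⟩] using hT ⟨h, hh⟩) hS
  exact ⟨czero.interleave.comp (G.prod (S.comp H.mkQL)), c, hc,
    fun x => (hGS x).trans (czero.norm_le_norm_interleave _)⟩

theorem stmt19 [CompleteSpace E] (H : Submodule 𝕜 E)
    [hH : IsClosed (H : Set E)]
    (h1 : ∃ T : H →L[𝕜] czero 𝕜, ∃ c > (0 : ℝ), ∀ x : H, c * ‖x‖ ≤ ‖T x‖)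
    (h2 : ∃ S : (E ⧸ H) →L[𝕜] czero 𝕜, ∃ c > (0 : ℝ), ∀ y : E ⧸ H, c * ‖y‖ ≤ ‖S y‖) :
    ∃ R : E →L[𝕜] czero 𝕜, ∃ c > (0 : ℝ), ∀ x : E, c * ‖x‖ ≤ ‖R x‖ :=
  stmt19_general H h1 h2
end
end
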